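/- Let n be a positive integer, let h : [0,π] → ℝ be continuous, and define ω_n : [0,π] × [0,π] → ℝ by ω_n(t,s) = −sin(n t) cos(n s)/n if t ≤ s and ω_n(t,s) = −sin(n s) cos(n t)/n if s ≤ t. Then the function v(t) = ∫₀^π ω_n(t,s) h(s) ds is twice continuously differentiable on [0,π] and satisfies v''(t) + n² v(t) = h(t) for t ∈ (0,π), v(0) = 0, and v(π) = ((−1)^{n+1}/n) ∫₀^π sin(n s) h(s) ds. -/

import Mathlib

open Set Real

/-- The kernel `ω_n(t,s)` built from the solutions `sin(nt)` and `−cos(nt)/n`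
of `v'' + n² v = 0`. -/
noncomputable def omegaKernel (n : ℕ) (t s : ℝ) : ℝ :=
  if t ≤ s then -(Real.sin (n * t) * Real.cos (n * s)) / n
  else -(Real.sin (n * s) * Real.cos (n * t)) / n

/-!
For `t ∈ [a, b]` (here `k = n` and `[a, b] = [0, π]`), splitting the integral at `s = t` puts `v`
in variation-of-parameters form
`v t = -(cos (k t) ∫ₐᵗ sin (k s) h s ds + sin (k t) ∫ₜᵇ cos (k s) h s ds) / k`.
When this is differentiated, the terms coming from the variable limits cancel, leaving
`v' t = sin (k t) ∫ₐᵗ sin (k s) h s ds - cos (k t) ∫ₜᵇ cos (k s) h s ds`; differentiating once more,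
they add up to `(sin² + cos²) h = h`, so `v'' = h - k² v`. At `t = 0` only the `sin` term survives,
and it vanishes; at `t = π` only the `cos` term survives, with `cos (n π) = (-1) ^ n`.
Since `h` is only continuous on `[0, π]`, it is first extended to a continuous function on `ℝ`,
constant outside `[0, π]`; the integrals do not change.
-/

open intervalIntegral Filter Topology

noncomputable def greenSolution (k a b : ℝ) (H : ℝ → ℝ) (t : ℝ) : ℝ :=
  -(cos (k * t) * (∫ s in a..t, sin (k * s) * H s) +
      sin (k * t) * ∫ s in t..b, cos (k * s) * H s) / k

noncomputable def greenSolutionDeriv (k a b : ℝ) (H : ℝ → ℝ) (t : ℝ) : ℝ :=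
  sin (k * t) * (∫ s in a..t, sin (k * s) * H s) -
    cos (k * t) * ∫ s in t..b, cos (k * s) * H s

section

variable {k a b : ℝ} {H : ℝ → ℝ}

lemma hasDerivAt_integral_sin_mul (hH : Continuous H) (k a t : ℝ) :
    HasDerivAt (fun t => ∫ s in a..t, sin (k * s) * H s) (sin (k * t) * H t) t :=
  ((continuous_sin.comp (continuous_const_mul k)).mul hH).integral_hasStrictDerivAt a t
    |>.hasDerivAt

lemma hasDerivAt_integral_cos_mul (hH : Continuous H) (k b t : ℝ) :
    HasDerivAt (fun t => ∫ s in t..b, cos (k * s) * H s) (-(cos (k * t) * H t)) t := by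
  have hf : Continuous fun s => cos (k * s) * H s :=
    (continuous_cos.comp (continuous_const_mul k)).mul hH
  exact integral_hasDerivAt_left (hf.intervalIntegrable _ _)
    (hf.stronglyMeasurableAtFilter _ _) hf.continuousAt

lemma hasDerivAt_sin_mul (k t : ℝ) :
    HasDerivAt (fun t => sin (k * t)) (cos (k * t) * k) t := by
  simpa using ((hasDerivAt_id t).const_mul k).sin

lemma hasDerivAt_cos_mul (k t : ℝ) :
    HasDerivAt (fun t => cos (k * t)) (-sin (k * t) * k) t := by
  simpa using ((hasDerivAt_id t).const_mul k).cos

lemma hasDerivAt_greenSolution (hk : k ≠ 0) (hH : Continuous H) (t : ℝ) :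
    HasDerivAt (greenSolution k a b H) (greenSolutionDeriv k a b H t) t := by
  have := (((hasDerivAt_cos_mul k t).mul (hasDerivAt_integral_sin_mul hH k a t)).add
    ((hasDerivAt_sin_mul k t).mul (hasDerivAt_integral_cos_mul hH k b t))).neg.div_const k
  refine this.congr_deriv ?_
  simp only [greenSolutionDeriv]
  field_simp
  ring

lemma hasDerivAt_greenSolutionDeriv (hH : Continuous H) (t : ℝ) :
    HasDerivAt (greenSolutionDeriv k a b H) (H t - k ^ 2 * greenSolution k a b H t) t := by
  have := ((hasDerivAt_sin_mul k t).mul (hasDerivAt_integral_sin_mul hH k a t)).sub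
    ((hasDerivAt_cos_mul k t).mul (hasDerivAt_integral_cos_mul hH k b t))
  refine this.congr_deriv ?_
  simp only [greenSolution]
  field_simp
  linear_combination H t * sin_sq_add_cos_sq (k * t)

lemma deriv_greenSolution (hk : k ≠ 0) (hH : Continuous H) :
    deriv (greenSolution k a b H) = greenSolutionDeriv k a b H :=
  funext fun t => (hasDerivAt_greenSolution hk hH t).deriv

lemma deriv_deriv_greenSolution_add (hk : k ≠ 0) (hH : Continuous H) (t : ℝ) :
    deriv (deriv (greenSolution k a b H)) t + k ^ 2 * greenSolution k a b H t = H t := by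
  rw [deriv_greenSolution hk hH, (hasDerivAt_greenSolutionDeriv hH t).deriv]
  ring

lemma contDiff_greenSolution (hk : k ≠ 0) (hH : Continuous H) :
    ContDiff ℝ 2 (greenSolution k a b H) := by
  have hw : Differentiable ℝ (greenSolution k a b H) :=
    fun t => (hasDerivAt_greenSolution hk hH t).differentiableAt
  have hw' : Differentiable ℝ (greenSolutionDeriv k a b H) :=
    fun t => (hasDerivAt_greenSolutionDeriv hH t).differentiableAt
  rw [show (2 : WithTop ℕ∞) = 1 + 1 from rfl, contDiff_succ_iff_deriv,
    deriv_greenSolution hk hH, contDiff_one_iff_deriv,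
    show deriv (greenSolutionDeriv k a b H) = _ from
      funext fun t => (hasDerivAt_greenSolutionDeriv hH t).deriv]
  exact ⟨hw, by simp, hw', hH.sub (continuous_const.mul hw.continuous)⟩

lemma greenSolution_left : greenSolution k 0 b H 0 = 0 := by
  simp [greenSolution]

lemma greenSolution_right :
    greenSolution k a b H b = -(cos (k * b) * ∫ s in a..b, sin (k * s) * H s) / k := by
  simp [greenSolution]

end

lemma continuous_omegaKernel (n : ℕ) (t : ℝ) : Continuous (omegaKernel n t) := by
  refine Continuous.if_le (by fun_prop) (by fun_prop) continuous_const continuous_id ?_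
  rintro s rfl
  ring

lemma integral_omegaKernel_mul {n : ℕ} {a b t : ℝ} (ht : t ∈ Icc a b) {H : ℝ → ℝ}
    (hH : Continuous H) :
    ∫ s in a..b, omegaKernel n t s * H s = greenSolution n a b H t := by
  have hf : Continuous fun s => omegaKernel n t s * H s := (continuous_omegaKernel n t).mul hH
  have below : ∫ s in a..t, omegaKernel n t s * H s =
      ∫ s in a..t, -cos (n * t) / n * (sin (n * s) * H s) := by
    refine integral_congr fun s hs => ?_
    rw [uIcc_of_le ht.1] at hs
    rcases hs.2.eq_or_lt with rfl | hst
    · simp only [omegaKernel, le_refl, if_true]; ring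
    · simp only [omegaKernel, if_neg hst.not_ge]; ring
  have above : ∫ s in t..b, omegaKernel n t s * H s =
      ∫ s in t..b, -sin (n * t) / n * (cos (n * s) * H s) := by
    refine integral_congr fun s hs => ?_
    rw [uIcc_of_le ht.2] at hs
    simp only [omegaKernel, if_pos hs.1]; ring
  rw [← integral_add_adjacent_intervals (hf.intervalIntegrable a t) (hf.intervalIntegrable t b),
    below, above, integral_const_mul, integral_const_mul, greenSolution]
  ring

/-- The generalized Green's operator `v(t) = ∫₀^π ω_n(t,s) h(s) ds`
produces a twice continuously differentiable function satisfying `v'' + n² v = h`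
on `(0,π)`, `v(0) = 0`, and `v(π) = ((−1)^{n+1}/n) ∫₀^π sin(ns) h(s) ds`. -/
theorem green_operator_properties (n : ℕ) (hn : 0 < n)
    (h : ℝ → ℝ) (hh : ContinuousOn h (Icc 0 π)) :
    ContDiffOn ℝ 2 (fun t => ∫ s in (0 : ℝ)..π, omegaKernel n t s * h s) (Icc 0 π) ∧
    (∀ t ∈ Ioo (0 : ℝ) π,
        deriv (deriv (fun t' => ∫ s in (0 : ℝ)..π, omegaKernel n t' s * h s)) t +
          (n : ℝ) ^ 2 * (∫ s in (0 : ℝ)..π, omegaKernel n t s * h s) = h t) ∧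
    (∫ s in (0 : ℝ)..π, omegaKernel n 0 s * h s) = 0 ∧
    (∫ s in (0 : ℝ)..π, omegaKernel n π s * h s) =
      ((-1 : ℝ) ^ (n + 1) / n) * ∫ s in (0 : ℝ)..π, Real.sin (n * s) * h s := by
  have hk : (n : ℝ) ≠ 0 := by positivity
  set H := IccExtend pi_pos.le ((Icc 0 π).domRestrict h)
  have hH : Continuous H := continuous_IccExtend_iff.2 hh.domRestrict
  have hHh : EqOn H h (Icc 0 π) := fun s hs => IccExtend_of_mem _ _ hs
  have hint (g : ℝ → ℝ) : ∫ s in (0 : ℝ)..π, g s * h s = ∫ s in (0 : ℝ)..π, g s * H s :=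
    integral_congr fun s hs => by rw [hHh (uIcc_of_le pi_pos.le ▸ hs)]
  have hv : ∀ t ∈ Icc 0 π,
      ∫ s in (0 : ℝ)..π, omegaKernel n t s * h s = greenSolution n 0 π H t :=
    fun t ht => (hint _).trans (integral_omegaKernel_mul ht hH)
  refine ⟨(contDiff_greenSolution hk hH).contDiffOn.congr hv, fun t ht => ?_, ?_, ?_⟩
  · have hev : (fun t => ∫ s in (0 : ℝ)..π, omegaKernel n t s * h s) =ᶠ[𝓝 t]
        greenSolution n 0 π H :=
      eventuallyEq_of_mem (Ioo_mem_nhds ht.1 ht.2) fun t ht => hv t (Ioo_subset_Icc_self ht)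
    rw [hev.deriv.deriv_eq, hv t (Ioo_subset_Icc_self ht), ← hHh (Ioo_subset_Icc_self ht)]
    exact deriv_deriv_greenSolution_add hk hH t
  · rw [hv 0 (left_mem_Icc.2 pi_pos.le), greenSolution_left]
  · rw [hv π (right_mem_Icc.2 pi_pos.le), greenSolution_right, hint, cos_nat_mul_pi]
    field_simp
    ring
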